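/- arXiv:math/0310390 — 4 statements merged into one kernel-verified Lean document; each statement's English description precedes it below -/
import Mathlib

section
/- Let 𝔤 be a finite-dimensional Lie algebra over a field K with Killing form κ, and let Z ∈ 𝔤 be such that there exists H ∈ 𝔤 with ⁅H, Z⁆ = Z. Then 𝔷_{[Z]} ⊆ Z^⊥; that is, for every X ∈ 𝔤 and every λ ∈ K with ⁅X, Z⁆ = λ • Z one has κ(X, Z) = 0. -/
/-- Let `𝔤` be a finite-dimensional Lie algebra over a field `K` with Killing form `κ`, and let
`Z ∈ 𝔤` be such that there exists `H ∈ 𝔤` with `⁅H, Z⁆ = Z`. Then `𝔷_{[Z]} ⊆ Z^⊥`; that is, for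
every `X ∈ 𝔤` and every `λ ∈ K` with `⁅X, Z⁆ = λ • Z` one has `κ(X, Z) = 0`. -/
theorem projective_centralizer_subset_killing_orthogonal
    {K : Type*} [Field K] {L : Type*} [LieRing L] [LieAlgebra K L]
    [FiniteDimensional K L] (Z : L) (hH : ∃ H : L, ⁅H, Z⁆ = Z) :
    ∀ X : L, ∀ l : K, ⁅X, Z⁆ = l • Z → killingForm K L X Z = 0 := by
  obtain ⟨H, hHZ⟩ := hH
  intro X l hXZ
  have hHZ0 : killingForm K L H Z = 0 := by
    calc killingForm K L H Z = killingForm K L H ⁅H, Z⁆ := by rw [hHZ]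
    _ = killingForm K L ⁅H, H⁆ Z := (LieModule.traceForm_apply_lie_apply K L L H H Z).symm
    _ = 0 := by simp
  have : killingForm K L Z X = 0 := by
    calc killingForm K L Z X = killingForm K L ⁅H, Z⁆ X := by rw [hHZ]
    _ = killingForm K L H ⁅Z, X⁆ := LieModule.traceForm_apply_lie_apply K L L H Z X
    _ = killingForm K L H (-(l • Z)) := by rw [← lie_skew, hXZ]
    _ = 0 := by simp [hHZ0]
  rw [LieModule.traceForm_comm] at this
  exact this
end

section
/- Let 𝔤 be a finite-dimensional Lie algebra over a field K whose Killing form κ is nondegenerate, and let Z ∈ 𝔤 with Z ≠ 0. Suppose Y ∈ 𝔤 satisfies κ(Y, Z) = 0 and κ(⁅X, Y⁆, Z) = 0 for every X ∈ 𝔤 with κ(X, Z) = 0. Then there exists λ ∈ K with ⁅Y, Z⁆ = λ • Z, i.e. Y ∈ 𝔷_{[Z]}. -/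
/-! By invariance of the Killing form, `X ↦ κ(X, ⁅Y, Z⁆) = κ(⁅X, Y⁆, Z)` vanishes on the kernel of
`X ↦ κ(X, Z)`, so it is a multiple `λ κ(·, Z)` of that functional; nondegeneracy of `κ` then
gives `⁅Y, Z⁆ = λ • Z`. -/

theorem LinearMap.exists_eq_smul_of_ker_le_ker {K V : Type*} [Field K] [AddCommGroup V]
    [Module K V] {f g : V →ₗ[K] K} (h : ker f ≤ ker g) : ∃ c : K, g = c • f := by
  have hspan := mem_span_of_iInf_ker_le_ker (L := fun _ : Unit ↦ f) (by simpa using h)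
  rw [Set.range_const, Submodule.mem_span_singleton] at hspan
  obtain ⟨c, hc⟩ := hspan
  exact ⟨c, hc.symm⟩

theorem LinearMap.SeparatingRight.exists_eq_smul_of_ker_flip_le
    {K M N : Type*} [Field K] [AddCommGroup M] [Module K M] [AddCommGroup N] [Module K N]
    {B : M →ₗ[K] N →ₗ[K] K} (hB : B.SeparatingRight) {v w : N}
    (h : ker (B.flip v) ≤ ker (B.flip w)) : ∃ c : K, w = c • v := by
  obtain ⟨c, hc⟩ := exists_eq_smul_of_ker_le_ker h
  refine ⟨c, sub_eq_zero.1 <| hB _ fun x ↦ ?_⟩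
  simpa [sub_eq_zero] using LinearMap.congr_fun hc x

theorem mem_projective_centralizer_of_pairing_eq_zero_general
    {K : Type*} [Field K] {L : Type*} [LieRing L] [LieAlgebra K L]
    [FiniteDimensional K L] (hnd : (killingForm K L).Nondegenerate)
    (Z : L) (Y : L)
    (hY : ∀ X : L, killingForm K L X Z = 0 → killingForm K L ⁅X, Y⁆ Z = 0) :
    ∃ l : K, ⁅Y, Z⁆ = l • Z := by
  refine hnd.2.exists_eq_smul_of_ker_flip_le fun X hX ↦ ?_
  rw [LinearMap.mem_ker, LinearMap.flip_apply, ← LieModule.traceForm_apply_lie_apply]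
  exact hY X hX

/-- Let `𝔤` be a finite-dimensional Lie algebra over a field `K` whose Killing form `κ` is
nondegenerate, and let `Z ∈ 𝔤` with `Z ≠ 0`. Suppose `Y ∈ 𝔤` satisfies `κ(Y, Z) = 0` and
`κ(⁅X, Y⁆, Z) = 0` for every `X ∈ 𝔤` with `κ(X, Z) = 0`. Then there exists `λ ∈ K` with
`⁅Y, Z⁆ = λ • Z`, i.e. `Y ∈ 𝔷_{[Z]}`. -/
theorem mem_projective_centralizer_of_pairing_eq_zero
    {K : Type*} [Field K] {L : Type*} [LieRing L] [LieAlgebra K L]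
    [FiniteDimensional K L] (hnd : (killingForm K L).Nondegenerate)
    (Z : L) (hZ : Z ≠ 0) (Y : L) (hYZ : killingForm K L Y Z = 0)
    (hY : ∀ X : L, killingForm K L X Z = 0 → killingForm K L ⁅X, Y⁆ Z = 0) :
    ∃ l : K, ⁅Y, Z⁆ = l • Z :=
  mem_projective_centralizer_of_pairing_eq_zero_general hnd Z Y hY
end

section
/- Let 𝔤 be a finite-dimensional Lie algebra over a field K whose Killing form κ is nondegenerate, and let Z ∈ 𝔤 with Z ≠ 0. Then for Y ∈ 𝔤 the following are equivalent: (i) κ(⁅X, Y⁆, Z) = 0 for every X ∈ 𝔤 with κ(X, Z) = 0; (ii) there exists λ ∈ K with ⁅Y, Z⁆ = λ • Z. In other words, the radical of the pairing (X, Y) ↦ κ(⁅X, Y⁆, Z) restricted to Z^⊥ is exactly 𝔷_{[Z]}. -/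
/-!
By invariance, `κ(⁅X, Y⁆, Z) = κ(X, ⁅Y, Z⁆)`, so (i) says that the functional `κ(·, ⁅Y, Z⁆)`
vanishes on the kernel of `κ(·, Z)` and is therefore a multiple `l • κ(·, Z)`; nondegeneracy
of `κ` turns this into `⁅Y, Z⁆ = l • Z`.
-/

namespace LinearMap

variable {K E F : Type*} [Field K] [AddCommGroup E] [Module K E] [AddCommGroup F] [Module K F]

theorem exists_eq_smul_of_ker_le {ψ φ : E →ₗ[K] K} (h : ker ψ ≤ ker φ) :
    ∃ c : K, φ = c • ψ := by
  have hspan : φ ∈ Submodule.span K (Set.range fun _ : Unit => ψ) :=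
    mem_span_of_iInf_ker_le_ker (by rwa [iInf_const])
  rw [Set.range_const, Submodule.mem_span_singleton] at hspan
  obtain ⟨c, hc⟩ := hspan
  exact ⟨c, hc.symm⟩

theorem SeparatingRight.forall_apply_eq_zero_imp_apply_eq_zero_iff {B : E →ₗ[K] F →ₗ[K] K}
    (hB : B.SeparatingRight) (z w : F) :
    (∀ x, B x z = 0 → B x w = 0) ↔ ∃ c : K, w = c • z := by
  constructor
  · intro h
    obtain ⟨c, hc⟩ := exists_eq_smul_of_ker_le (ψ := B.flip z) (φ := B.flip w) fun x => h x
    refine ⟨c, sub_eq_zero.mp (hB _ fun x => ?_)⟩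
    simpa [sub_eq_zero] using congr($hc x)
  · rintro ⟨c, rfl⟩ x hx
    simp [hx]

end LinearMap

theorem pairing_radical_eq_projective_centralizer_general
    {K : Type*} [Field K] {L : Type*} [LieRing L] [LieAlgebra K L]
    [FiniteDimensional K L] (hnd : (killingForm K L).Nondegenerate)
    (Z : L) (Y : L) :
    (∀ X : L, killingForm K L X Z = 0 → killingForm K L ⁅X, Y⁆ Z = 0) ↔
      ∃ l : K, ⁅Y, Z⁆ = l • Z := by
  have invariant (X : L) : killingForm K L ⁅X, Y⁆ Z = killingForm K L X ⁅Y, Z⁆ :=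
    LieModule.traceForm_apply_lie_apply K L L X Y Z
  simp only [invariant]
  exact hnd.2.forall_apply_eq_zero_imp_apply_eq_zero_iff Z ⁅Y, Z⁆

/-- Let `𝔤` be a finite-dimensional Lie algebra over a field `K` whose Killing form `κ` is
nondegenerate, and let `Z ∈ 𝔤` with `Z ≠ 0`. Then for `Y ∈ 𝔤` the following are equivalent:
(i) `κ(⁅X, Y⁆, Z) = 0` for every `X ∈ 𝔤` with `κ(X, Z) = 0`;
(ii) there exists `λ ∈ K` with `⁅Y, Z⁆ = λ • Z`. -/
theorem pairing_radical_eq_projective_centralizer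
    {K : Type*} [Field K] {L : Type*} [LieRing L] [LieAlgebra K L]
    [FiniteDimensional K L] (hnd : (killingForm K L).Nondegenerate)
    (Z : L) (hZ : Z ≠ 0) (Y : L) :
    (∀ X : L, killingForm K L X Z = 0 → killingForm K L ⁅X, Y⁆ Z = 0) ↔
      ∃ l : K, ⁅Y, Z⁆ = l • Z :=
  pairing_radical_eq_projective_centralizer_general hnd Z Y
end

section
/- Let 𝔤 be a finite-dimensional Lie algebra over a field K with Killing form κ. Let X₁, X₂, Z ∈ 𝔤 with κ(Z, X₁) = 0 and κ(Z, X₂) = 0, and suppose there exist λ, λ₁, λ₂ ∈ K with λ₁ ≠ 0 such that λ • Z = λ₁ • ⁅X₁, Z⁆ + λ₂ • ⁅X₂, Z⁆. Then κ(⁅X₁, X₂⁆, Z) = 0. -/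
/-- Let `𝔤` be a finite-dimensional Lie algebra over a field `K` with Killing form `κ`. Let
`X₁, X₂, Z ∈ 𝔤` with `κ(Z, X₁) = 0` and `κ(Z, X₂) = 0`, and suppose there exist
`λ, λ₁, λ₂ ∈ K` with `λ₁ ≠ 0` such that `λ • Z = λ₁ • ⁅X₁, Z⁆ + λ₂ • ⁅X₂, Z⁆`.
Then `κ(⁅X₁, X₂⁆, Z) = 0`. -/
theorem killingForm_bracket_eq_zero_of_dependent_at_point
    {K : Type*} [Field K] {L : Type*} [LieRing L] [LieAlgebra K L]
    [FiniteDimensional K L] (X₁ X₂ Z : L)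
    (h₁ : killingForm K L Z X₁ = 0) (h₂ : killingForm K L Z X₂ = 0)
    (l l₁ l₂ : K) (hl₁ : l₁ ≠ 0)
    (hdep : l • Z = l₁ • ⁅X₁, Z⁆ + l₂ • ⁅X₂, Z⁆) :
    killingForm K L ⁅X₁, X₂⁆ Z = 0 := by
  have key := congrArg (killingForm K L X₂) hdep
  have hsym : killingForm K L X₂ Z = 0 := by
    rw [LieModule.traceForm_comm]; exact h₂
  have e1 : killingForm K L X₂ ⁅X₂, Z⁆ = 0 := by
    rw [← LieModule.traceForm_apply_lie_apply, lie_self]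
    simp
  have e2 : killingForm K L X₂ ⁅X₁, Z⁆ = - killingForm K L ⁅X₁, X₂⁆ Z := by
    rw [← LieModule.traceForm_apply_lie_apply, ← lie_skew X₁ X₂, map_neg,
      LinearMap.neg_apply, neg_neg]
  simp only [map_add, map_smul, smul_eq_mul, hsym, e1, e2, mul_zero, mul_neg,
    add_zero] at key
  rcases mul_eq_zero.mp (neg_eq_zero.mp key.symm) with h | h
  · exact absurd h hl₁
  · exact h
end
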